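/- Given a labeled transition system with state set S, a finite set R of rule names, a deterministic transition function step : R → S → Option S, an extraction function E : R → S → S → E_ev producing trace events, a restriction map π : S → Q, a family of reconstruction functions C : R → E_ev → E_ev → Q → Q, and a family of conditions Cond : R → E_ev → E_ev → Prop, suppose that for all rules r, r' and states S, S', S'' with step r S = some S' and step r' S' = some S'', (1) Cond r (E r S S') (E r' S' S'') holds and Cond s (E r S S') (E r' S' S'') fails for every s ≠ r, and (2) C r (E r S S') (E r' S' S'') (π S) = π S'. Then for any execution S₀, S₁, ..., S_{t+1} with events w_i = E r_i S_i S_{i+1}, let F be the function that folds, over consecutive event pairs, the reconstruction function selected by the (unique) satisfied condition; then F applied to the first i+1 events and π S₀ equals π S_i for all i ≤ t. -/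
import Mathlib


open Classical

/-- The reconstruction function `F`, folding local reconstruction functions
selected by the (unique) satisfied condition on consecutive event pairs.
The event list is in reverse chronological order: `[w_t, w_{t-1}, ..., w_0]`. -/
noncomputable def reconF {R Eev Q : Type*} (C : R → Eev → Eev → Q → Q)
    (Cond : R → Eev → Eev → Prop) : List Eev → Q → Q
  | [], q => q
  | [_], q => q
  | e' :: e :: rest, q =>
      if h : ∃ r, Cond r e e' then
        C h.choose e e' (reconF C Cond (e :: rest) q)
      else reconF C Cond (e :: rest) q

/-- **Adequacy theorem.** Under exclusive identification conditions and local
reconstruction correctness, the reconstruction function applied to the first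
`i+1` trace events recovers the restricted state `π S_i`, for all `i ≤ t`. -/
theorem adequacy
    {S R Eev Q : Type*} [Fintype R]
    (step : R → S → Option S)
    (E : R → S → S → Eev)
    (π : S → Q)
    (C : R → Eev → Eev → Q → Q)
    (Cond : R → Eev → Eev → Prop)
    (h1 : ∀ (r r' : R) (s s' s'' : S), step r s = some s' → step r' s' = some s'' →
      Cond r (E r s s') (E r' s' s'') ∧
        ∀ q : R, q ≠ r → ¬ Cond q (E r s s') (E r' s' s''))
    (h2 : ∀ (r r' : R) (s s' s'' : S), step r s = some s' → step r' s' = some s'' →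
      C r (E r s s') (E r' s' s'') (π s) = π s')
    (t : ℕ)
    (St : ℕ → S) (ru : ℕ → R)
    (hexec : ∀ i ≤ t, step (ru i) (St i) = some (St (i + 1)))
    (w : ℕ → Eev)
    (hw : ∀ i ≤ t, w i = E (ru i) (St i) (St (i + 1))) :
    ∀ i ≤ t, reconF C Cond (((List.range (i + 1)).map w).reverse) (π (St 0)) = π (St i) := by
  intro i hi
  induction i with
  | zero => simp [reconF]
  | succ n ih =>
    have hn : n ≤ t := Nat.le_of_succ_le hi
    have ihn := ih hn
    have hshape : ((List.range (n + 1 + 1)).map w).reverse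
        = w (n+1) :: ((List.range (n + 1)).map w).reverse := by
      simp [List.range_succ]
    rw [hshape]
    have hshape2 : ((List.range (n + 1)).map w).reverse
        = w n :: ((List.range n).map w).reverse := by
      simp [List.range_succ]
    rw [hshape2] at ihn ⊢
    rw [reconF]
    have hc := h1 (ru n) (ru (n+1)) (St n) (St (n+1)) (St (n+2)) (hexec n hn) (hexec (n+1) hi)
    have hwn := hw n hn
    have hwn1 := hw (n+1) hi
    rw [← hwn, ← hwn1] at hc
    have hex : ∃ r, Cond r (w n) (w (n+1)) := ⟨ru n, hc.1⟩
    rw [dif_pos hex]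
    have hch : hex.choose = ru n := by
      by_contra h
      exact hc.2 _ h hex.choose_spec
    rw [hch, ihn, hwn, hwn1]
    exact h2 _ _ _ _ _ (hexec n hn) (hexec (n+1) hi)
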